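/- Let Γ be a distance-regular graph with classical parameters (D, b, α, β) with D ≥ 3 and b ≥ 2, and let r = [D]. Then every clique C of Γ has at most β + 1 vertices. Moreover, if C is a clique with exactly β + 1 vertices, then every vertex of Γ is at distance at most D−1 from C, and for every vertex x at distance j from C (0 ≤ j ≤ D−1), the number of vertices of C at distance j from x equals 1 + α[j]; in particular, a vertex at distance 1 from C has exactly 1 + α neighbours in C. -/

import Mathlib

open SimpleGraph

namespace DRGPaper

variable {V : Type*}

/-- `Γ` is a distance-regular graph with diameter `D` and intersection arrays `cc`, `aa`, `bb`:
`Γ` is connected of diameter `D` and for any vertices `x, y` at distance `i ≤ D`, `y` has exactly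
`cc i` neighbours at distance `i - 1` from `x`, `aa i` neighbours at distance `i` from `x`,
and `bb i` neighbours at distance `i + 1` from `x`. -/
def IsDRG [Fintype V] (G : SimpleGraph V) (D : ℕ) (cc aa bb : ℕ → ℕ) : Prop :=
  G.Connected ∧
  (∀ x y : V, G.dist x y ≤ D) ∧
  (∃ x y : V, G.dist x y = D) ∧
  ∀ i : ℕ, i ≤ D → ∀ x y : V, G.dist x y = i →
    {z : V | G.Adj y z ∧ G.dist x z = i - 1}.ncard = cc i ∧
    {z : V | G.Adj y z ∧ G.dist x z = i}.ncard = aa i ∧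
    {z : V | G.Adj y z ∧ G.dist x z = i + 1}.ncard = bb i

/-- `[j] = (b^j - 1)/(b - 1) = 1 + b + ⋯ + b^(j-1)` as a real number. -/
def gauss (b j : ℕ) : ℝ := ∑ i ∈ Finset.range j, (b : ℝ) ^ i

/-- `Γ` has classical parameters `(D, b, α, β)`: it is distance-regular of diameter `D` with
`bb i = ([D] - [i])(β - α[i])` for `0 ≤ i ≤ D - 1` and `cc i = [i](1 + α[i-1])` for
`1 ≤ i ≤ D`. -/
def HasClassicalParams [Fintype V] (G : SimpleGraph V) (D b : ℕ) (α β : ℝ)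
    (cc aa bb : ℕ → ℕ) : Prop :=
  IsDRG G D cc aa bb ∧
  (∀ i : ℕ, i ≤ D - 1 → (bb i : ℝ) = (gauss b D - gauss b i) * (β - α * gauss b i)) ∧
  (∀ i : ℕ, 1 ≤ i → i ≤ D → (cc i : ℝ) = gauss b i * (1 + α * gauss b (i - 1)))

/-- `d(x, C) = min {d(x, y) : y ∈ C}`. -/
noncomputable def distToSet (G : SimpleGraph V) (x : V) (C : Set V) : ℕ :=
  sInf (G.dist x '' C)

/-- A maximal clique of `G`. -/
def IsMaxClique (G : SimpleGraph V) (s : Set V) : Prop :=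
  G.IsClique s ∧ ∀ t : Set V, G.IsClique t → s ⊆ t → t = s

/-- The lines for the PLS(γ) property: maximal cliques with at least `γ` vertices. -/
def plsLines (G : SimpleGraph V) (γ : ℕ) : Set (Set V) :=
  {ℓ : Set V | IsMaxClique G ℓ ∧ γ ≤ ℓ.ncard}

/-- `G` is the point graph of the partial linear space with line set `L`: any two adjacent
vertices lie on exactly one common line of `L`. -/
def IsPointGraphOf (G : SimpleGraph V) (L : Set (Set V)) : Prop :=
  ∀ x y : V, G.Adj x y → ∃! ℓ : Set V, ℓ ∈ L ∧ x ∈ ℓ ∧ y ∈ ℓ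

/-- A vertex is a Delsarte vertex (w.r.t. the line set `L` and classical parameter `β`) if all
lines through it have exactly `β + 1` vertices. -/
def IsDelsarteVertex (L : Set (Set V)) (β : ℝ) (x : V) : Prop :=
  ∀ ℓ ∈ L, x ∈ ℓ → (ℓ.ncard : ℝ) = β + 1

/-- The lines for the SPLS(c, s) property: maximal cliques with at least
`a1 + 2 - (c - 1)(s - 1)` vertices. -/
def splsLines (G : SimpleGraph V) (a1 c s : ℕ) : Set (Set V) :=
  {ℓ : Set V | IsMaxClique G ℓ ∧ (a1 : ℤ) + 2 - ((c : ℤ) - 1) * ((s : ℤ) - 1) ≤ (ℓ.ncard : ℤ)}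

/-- The SPLS(c, s) property: `G` is the point graph of the partial linear space whose lines are
the maximal cliques with at least `a1 + 2 - (c-1)(s-1)` vertices, `a1 ≥ (2s-1)(c-1)`, each
vertex lies on at most `s` lines, and every point not on a line `ℓ` is collinear with at most
`c` points of `ℓ`.  SPLS(s) is the case `c = c₂`. -/
def HasSPLS (G : SimpleGraph V) (a1 c s : ℕ) : Prop :=
  1 ≤ c ∧ 2 ≤ s ∧
  (2 * (s : ℤ) - 1) * ((c : ℤ) - 1) ≤ (a1 : ℤ) ∧
  IsPointGraphOf G (splsLines G a1 c s) ∧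
  (∀ x : V, {ℓ ∈ splsLines G a1 c s | x ∈ ℓ}.ncard ≤ s) ∧
  (∀ ℓ ∈ splsLines G a1 c s, ∀ x : V, x ∉ ℓ → {y ∈ ℓ | G.Adj x y}.ncard ≤ c)

/-- `[x, y]`: the set of lines `ℓ ∈ L` through `x` such that `d(y, u) ≤ 2` for all `u ∈ ℓ`. -/
def lineXY (G : SimpleGraph V) (L : Set (Set V)) (x y : V) : Set (Set V) :=
  {ℓ ∈ L | x ∈ ℓ ∧ ∀ u ∈ ℓ, G.dist y u ≤ 2}

/-- `𝓒` witnesses that `G` is geometric with cliques of order `q`: every member of `𝓒` is a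
clique with exactly `q` vertices and every edge of `G` lies in a unique member of `𝓒`. -/
def IsGeomLineSet (G : SimpleGraph V) (q : ℝ) (𝓒 : Set (Set V)) : Prop :=
  (∀ C ∈ 𝓒, G.IsClique C ∧ (C.ncard : ℝ) = q) ∧
  ∀ x y : V, G.Adj x y → ∃! C : Set V, C ∈ 𝓒 ∧ x ∈ C ∧ y ∈ C

/-- `G` is geometric: there is a set of Delsarte cliques (cliques of the maximum order `q`)
such that every edge lies in a unique member. -/
def IsGeometric (G : SimpleGraph V) (q : ℝ) : Prop :=
  ∃ 𝓒 : Set (Set V), IsGeomLineSet G q 𝓒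

/-- An assembly: a maximal clique which is not a line. -/
def IsAssembly (G : SimpleGraph V) (𝓒 : Set (Set V)) (M : Set V) : Prop :=
  IsMaxClique G M ∧ M ∉ 𝓒

/-- The dual Pasch axiom: for every pair of adjacent vertices `x, y`, the common neighbours of
`x` and `y` outside the (any) line of `𝓒` through `x` and `y` form a clique. -/
def DualPasch (G : SimpleGraph V) (𝓒 : Set (Set V)) : Prop :=
  ∀ x y : V, G.Adj x y → ∀ ℓ ∈ 𝓒, x ∈ ℓ → y ∈ ℓ →
    G.IsClique {z : V | G.Adj x z ∧ G.Adj y z ∧ z ∉ ℓ}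

/-- The `m × n` grid, i.e. the Cartesian product `K_m □ K_n`. -/
def gridGraph (m n : ℕ) : SimpleGraph (Fin m × Fin n) :=
  (⊤ : SimpleGraph (Fin m)).boxProd (⊤ : SimpleGraph (Fin n))

/-- The `A`-clique extension of a graph `H`: replace every vertex of `H` by a clique of size
`A`, vertices in distinct cliques being adjacent exactly when the underlying vertices of `H`
are adjacent. -/
def cliqueExt {W : Type*} (H : SimpleGraph W) (A : ℕ) : SimpleGraph (W × Fin A) :=
  SimpleGraph.fromRel (fun p q => H.Adj p.1 q.1 ∨ p.1 = q.1)

/-- `θ` is an eigenvalue of the adjacency matrix of `G`. -/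
def IsAdjEigenvalue [Fintype V] (G : SimpleGraph V) [DecidableRel G.Adj] (θ : ℝ) : Prop :=
  ∃ v : V → ℝ, v ≠ 0 ∧ (G.adjMatrix ℝ).mulVec v = θ • v




section DelsarteAux
set_option linter.unusedSectionVars false
set_option linter.unusedVariables false
set_option linter.unusedTactic false
set_option linter.dupNamespace false
set_option maxHeartbeats 1000000

open Finset

noncomputable def xf (b : ℕ) (α β : ℝ) (i : ℕ) : ℝ := -((1 + α * gauss b i)/(β - α * gauss b i))
noncomputable def useq (b : ℕ) (α β : ℝ) (j : ℕ) : ℝ := ∏ i ∈ Finset.range j, xf b α β i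
noncomputable def krseq (cc bb : ℕ → ℕ) : ℕ → ℝ
  | 0 => 1
  | (i+1) => krseq cc bb i * bb i / cc (i+1)

lemma gauss_zero (b : ℕ) : gauss b 0 = 0 := by simp [gauss]
lemma gauss_one (b : ℕ) : gauss b 1 = 1 := by simp [gauss]
lemma gauss_nonneg (b j : ℕ) : 0 ≤ gauss b j :=
  Finset.sum_nonneg fun i _ => by positivity
lemma gauss_pos (b : ℕ) {j : ℕ} (hb : 2 ≤ b) (hj : 1 ≤ j) : 0 < gauss b j := by
  have : (0:ℝ) < (b:ℝ)^0 := by norm_num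
  refine Finset.sum_pos' (fun i _ => by positivity) ⟨0, by simp [Finset.mem_range]; omega, this⟩
lemma gauss_sub_pos {b i D : ℕ} (hb : 2 ≤ b) (hiD : i < D) : 0 < gauss b D - gauss b i := by
  unfold gauss
  rw [← Finset.sum_range_add_sum_Ico _ (le_of_lt hiD)]
  have : (0:ℝ) < ∑ t ∈ Finset.Ico i D, (b:ℝ)^t := by
    refine Finset.sum_pos (fun t _ => by positivity) ?_
    exact ⟨i, Finset.mem_Ico.mpr ⟨le_refl _, hiD⟩⟩
  linarith

lemma useq_zero (b : ℕ) (α β : ℝ) : useq b α β 0 = 1 := by simp [useq]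
lemma useq_succ (b : ℕ) (α β : ℝ) (j : ℕ) :
    useq b α β (j+1) = useq b α β j * xf b α β j := Finset.prod_range_succ _ _


section Basic
variable [Fintype V] {G : SimpleGraph V} {D : ℕ} {cc aa bb : ℕ → ℕ}

lemma ncard_eq_filter_card (p : V → Prop) [DecidablePred p] :
    {z : V | p z}.ncard = (Finset.univ.filter p).card := by
  rw [Set.ncard_eq_toFinset_card']
  congr 1
  ext z
  simp

/-- along a geodesic, intermediate distances are realized. -/
lemma walk_dists {x y : V} (hcon : G.Connected) :
    ∀ (p : G.Walk x y), p.length = G.dist x y → ∀ i, i ≤ p.length →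
      G.dist x (p.getVert i) = i ∧ G.dist (p.getVert i) y = p.length - i := by
  intro p
  induction p with
  | nil =>
    intro _ i hi
    simp only [SimpleGraph.Walk.length_nil, Nat.le_zero] at hi
    subst hi
    simp [SimpleGraph.dist_self]
  | @cons a c y hadj q IH =>
    intro hlen i hi
    simp only [SimpleGraph.Walk.length_cons] at hlen hi
    have hd1 : G.dist a c = 1 := SimpleGraph.dist_eq_one_iff_adj.mpr hadj
    have hq : q.length = G.dist c y := by
      have h1 : G.dist c y ≤ q.length := SimpleGraph.dist_le q
      have h2 : G.dist a y ≤ G.dist a c + G.dist c y := hcon.dist_triangle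
      omega
    cases i with
    | zero =>
      refine ⟨by simp [SimpleGraph.dist_self], ?_⟩
      simpa using hlen.symm
    | succ j =>
      have hj : j ≤ q.length := by omega
      obtain ⟨h1, h2⟩ := IH hq j hj
      have hgv : (SimpleGraph.Walk.cons hadj q).getVert (j+1) = q.getVert j := rfl
      rw [hgv]
      constructor
      · have hub : G.dist a (q.getVert j) ≤ j + 1 := by
          have := hcon.dist_triangle (u := a) (v := c) (w := q.getVert j)
          omega
        have hlb : G.dist a y ≤ G.dist a (q.getVert j) + G.dist (q.getVert j) y :=
          hcon.dist_triangle
        omega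
      · simp only [SimpleGraph.Walk.length_cons]
        omega

lemma exists_intermediate (hcon : G.Connected) {x y : V} {d : ℕ} (hd : G.dist x y = d)
    {i : ℕ} (hi : i ≤ d) : ∃ z : V, G.dist x z = i ∧ G.dist z y = d - i := by
  obtain ⟨p, hp⟩ := hcon.exists_walk_length_eq_dist x y
  obtain ⟨h1, h2⟩ := walk_dists hcon p hp i (by omega)
  exact ⟨p.getVert i, by rw [h1], by rw [h2]; omega⟩

lemma drg_realized (h : IsDRG G D cc aa bb) {i : ℕ} (hi : i ≤ D) :
    ∃ x y : V, G.dist x y = i := by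
  obtain ⟨x, y, hxy⟩ := h.2.2.1
  obtain ⟨z, hz, _⟩ := exists_intermediate h.1 hxy hi
  exact ⟨x, z, hz⟩

lemma drg_deg (h : IsDRG G D cc aa bb) (x : V) [DecidableRel G.Adj] :
    (Finset.univ.filter (fun z => G.Adj x z)).card = bb 0 := by
  have h3 := ((h.2.2.2 0 (by omega) x x SimpleGraph.dist_self).2.2)
  rw [← h3, ncard_eq_filter_card]
  congr 1
  ext z
  simp only [Finset.mem_filter, Finset.mem_univ, true_and]
  constructor
  · intro hz; exact ⟨hz, SimpleGraph.dist_eq_one_iff_adj.mpr hz⟩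
  · tauto

lemma dist_band (hcon : G.Connected) {x y z : V} (hz : G.Adj x z) (d : ℕ)
    (hd : G.dist y x = d) :
    G.dist y z = d - 1 ∨ G.dist y z = d ∨ G.dist y z = d + 1 := by
  have h1 : G.dist x z = 1 := SimpleGraph.dist_eq_one_iff_adj.mpr hz
  have h2 : G.dist y z ≤ G.dist y x + G.dist x z := hcon.dist_triangle
  have h3 : G.dist y x ≤ G.dist y z + G.dist z x := hcon.dist_triangle
  have h4 : G.dist z x = 1 := by rw [SimpleGraph.dist_comm]; exact h1
  omega

end Basic

section Count
variable [Fintype V] {G : SimpleGraph V} {D : ℕ} {cc aa bb : ℕ → ℕ}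

lemma split_sum (h : IsDRG G D cc aa bb) [DecidableRel G.Adj] (x y : V) {d : ℕ}
    (hd : G.dist y x = d) (hd1 : 1 ≤ d) (F : ℕ → ℝ) :
    ∑ z : V, (if G.Adj x z then F (G.dist y z) else 0)
      = (cc d : ℝ) * F (d-1) + (aa d : ℝ) * F d + (bb d : ℝ) * F (d+1) := by
  classical
  have hdD : d ≤ D := hd ▸ h.2.1 y x
  obtain ⟨hc, ha, hb⟩ := h.2.2.2 d hdD y x hd
  have e1 : ¬ (d - 1 = d) := by omega
  have e2 : ¬ (d = d + 1) := by omega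
  have e3 : ¬ (d - 1 = d + 1) := by omega
  have e1' : ¬ (d = d - 1) := by omega
  have e2' : ¬ (d + 1 = d) := by omega
  have e3' : ¬ (d + 1 = d - 1) := by omega
  have key : ∀ z : V, (if G.Adj x z then F (G.dist y z) else 0)
      = (if G.Adj x z ∧ G.dist y z = d-1 then F (d-1) else 0)
      + ((if G.Adj x z ∧ G.dist y z = d then F d else 0)
      + (if G.Adj x z ∧ G.dist y z = d+1 then F (d+1) else 0)) := by
    intro z
    by_cases hz : G.Adj x z
    · rcases dist_band h.1 hz d hd with h1 | h1 | h1 <;> rw [h1] <;> simp [hz, e1, e2, e3, e1', e2', e3']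
    · simp [hz]
  rw [Finset.sum_congr rfl (fun z _ => key z), Finset.sum_add_distrib, Finset.sum_add_distrib]
  have count : ∀ (i : ℕ) (c : ℝ), ∑ z : V, (if G.Adj x z ∧ G.dist y z = i then c else 0)
      = ((Finset.univ.filter (fun z => G.Adj x z ∧ G.dist y z = i)).card : ℝ) * c := by
    intro i c
    rw [← Finset.sum_filter, Finset.sum_const, nsmul_eq_mul]
  rw [count, count, count, ← ncard_eq_filter_card, ← ncard_eq_filter_card,
    ← ncard_eq_filter_card, hc, ha, hb]
  ring

lemma abc_sum (h : IsDRG G D cc aa bb) {j : ℕ} (h1 : 1 ≤ j) (hj : j ≤ D) :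
    ((cc j : ℝ)) + (aa j : ℝ) + (bb j : ℝ) = (bb 0 : ℝ) := by
  classical
  obtain ⟨x, y, hxy⟩ := drg_realized h hj
  have hyx : G.dist y x = j := by rw [SimpleGraph.dist_comm]; exact hxy
  have := split_sum h x y hyx h1 (fun _ => (1:ℝ))
  simp only [mul_one] at this
  rw [← this, ← Finset.sum_filter]
  rw [Finset.sum_const, nsmul_eq_mul, mul_one, drg_deg h x]

lemma cc_zero (h : IsDRG G D cc aa bb) : cc 0 = 0 := by
  obtain ⟨x, -, -⟩ := h.2.2.1
  have := (h.2.2.2 0 (Nat.zero_le D) x x SimpleGraph.dist_self).1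
  rw [← this]
  convert Set.ncard_empty V
  ext z
  simp only [Set.mem_setOf_eq, Set.mem_empty_iff_false, iff_false, not_and]
  intro hz hd
  exact G.ne_of_adj hz ((h.1.dist_eq_zero_iff).mp hd)

lemma bb_D (h : IsDRG G D cc aa bb) : bb D = 0 := by
  obtain ⟨x, y, hxy⟩ := h.2.2.1
  have := (h.2.2.2 D (le_refl D) x y hxy).2.2
  rw [← this]
  convert Set.ncard_empty V
  ext z
  simp only [Set.mem_setOf_eq, Set.mem_empty_iff_false, iff_false, not_and]
  intro _ hd
  have := h.2.1 x z
  omega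

lemma cc_pos (h : IsDRG G D cc aa bb) {i : ℕ} (h1 : 1 ≤ i) (hiD : i ≤ D) : 1 ≤ cc i := by
  obtain ⟨x, y, hxy⟩ := drg_realized h hiD
  obtain ⟨z, hz1, hz2⟩ := exists_intermediate h.1 hxy (Nat.sub_le i 1)
  have hadj : G.Adj y z := by
    rw [← SimpleGraph.dist_eq_one_iff_adj, SimpleGraph.dist_comm]
    rw [hz2]; omega
  have hmem : z ∈ {w : V | G.Adj y w ∧ G.dist x w = i - 1} := ⟨hadj, hz1⟩
  have hpos : 0 < {w : V | G.Adj y w ∧ G.dist x w = i - 1}.ncard :=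
    (Set.ncard_pos (Set.toFinite _)).mpr ⟨z, hmem⟩
  have := (h.2.2.2 i hiD x y hxy).1
  omega

lemma bb_pos (h : IsDRG G D cc aa bb) {i : ℕ} (hiD : i + 1 ≤ D) : 1 ≤ bb i := by
  obtain ⟨x, y, hxy⟩ := drg_realized h hiD
  obtain ⟨z, hz1, hz2⟩ := exists_intermediate h.1 hxy (by omega : i ≤ i + 1)
  have hadj : G.Adj z y := by
    rw [← SimpleGraph.dist_eq_one_iff_adj]
    rw [hz2]; omega
  have hmem : y ∈ {w : V | G.Adj z w ∧ G.dist x w = i + 1} := ⟨hadj, hxy⟩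
  have hpos : 0 < {w : V | G.Adj z w ∧ G.dist x w = i + 1}.ncard :=
    (Set.ncard_pos (Set.toFinite _)).mpr ⟨y, hmem⟩
  have := (h.2.2.2 i (by omega) x z hz1).2.2
  omega


lemma aa_zero (h : IsDRG G D cc aa bb) : aa 0 = 0 := by
  obtain ⟨x, -, -⟩ := h.2.2.1
  have := (h.2.2.2 0 (Nat.zero_le D) x x SimpleGraph.dist_self).2.1
  rw [← this]
  convert Set.ncard_empty V
  ext z
  simp only [Set.mem_setOf_eq, Set.mem_empty_iff_false, iff_false, not_and]
  intro hz hd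
  exact G.ne_of_adj hz ((h.1.dist_eq_zero_iff).mp hd)

end Count

section CP
variable [Fintype V] {G : SimpleGraph V} {D b : ℕ} {α β : ℝ} {cc aa bb : ℕ → ℕ}
  (h : HasClassicalParams G D b α β cc aa bb) (hb : 2 ≤ b) (hD : 3 ≤ D)
include h hb hD

lemma pos_P {i : ℕ} (hi : i ≤ D - 1) : 0 < 1 + α * gauss b i := by
  have h1 : 1 ≤ cc (i+1) := cc_pos h.1 (by omega) (by omega)
  have h2 : (cc (i+1) : ℝ) = gauss b (i+1) * (1 + α * gauss b i) := by
    have := h.2.2 (i+1) (by omega) (by omega)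
    simpa using this
  have h3 : 0 < gauss b (i+1) := gauss_pos b hb (by omega)
  have h4 : (1:ℝ) ≤ (cc (i+1) : ℝ) := by exact_mod_cast h1
  nlinarith
lemma pos_Q {i : ℕ} (hi : i ≤ D - 1) : 0 < β - α * gauss b i := by
  have h1 : 1 ≤ bb i := bb_pos h.1 (by omega)
  have h2 : (bb i : ℝ) = (gauss b D - gauss b i) * (β - α * gauss b i) := h.2.1 i hi
  have h3 : 0 < gauss b D - gauss b i := gauss_sub_pos hb (by omega)
  have h4 : (1:ℝ) ≤ (bb i : ℝ) := by exact_mod_cast h1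
  nlinarith
lemma beta_pos : 0 < β := by
  have := pos_Q h hb hD (i := 0) (by omega)
  simpa [gauss_zero] using this
lemma k_eq : (bb 0 : ℝ) = gauss b D * β := by
  have := h.2.1 0 (by omega)
  simpa [gauss_zero] using this

lemma xf_neg {i : ℕ} (hi : i ≤ D - 1) : xf b α β i < 0 := by
  have h1 := pos_P h hb hD hi
  have h2 := pos_Q h hb hD hi
  unfold xf
  have : 0 < (1 + α * gauss b i) / (β - α * gauss b i) := div_pos h1 h2
  linarith

lemma useq_ne {j : ℕ} (hj : j ≤ D) : useq b α β j ≠ 0 := by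
  unfold useq
  rw [Finset.prod_ne_zero_iff]
  intro i hi
  rw [Finset.mem_range] at hi
  exact ne_of_lt (xf_neg h hb hD (by omega))

lemma useq_one : useq b α β 1 = -(1/β) := by
  rw [show (1:ℕ) = 0 + 1 from rfl, useq_succ, useq_zero]
  simp [xf, gauss_zero]

lemma rrec {j : ℕ} (hj : j ≤ D) :
    (cc j : ℝ) * useq b α β (j-1) + (aa j : ℝ) * useq b α β j
      + (bb j : ℝ) * useq b α β (j+1) = -(gauss b D) * useq b α β j := by
  have hβ : β ≠ 0 := ne_of_gt (beta_pos h hb hD)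
  match j with
  | 0 =>
    rw [cc_zero h.1, aa_zero h.1, k_eq h hb hD, useq_zero, useq_one h hb hD]
    push_cast
    field_simp
    ring
  | (i+1) =>
    have hi : i ≤ D - 1 := by omega
    have haa : (aa (i+1) : ℝ) = (bb 0 : ℝ) - (cc (i+1) : ℝ) - (bb (i+1) : ℝ) := by
      have := abc_sum h.1 (by omega : 1 ≤ i + 1) hj
      linarith
    have hcc : (cc (i+1) : ℝ) = gauss b (i+1) * (1 + α * gauss b i) := by
      have := h.2.2 (i+1) (by omega) hj
      simpa using this
    have hu1 : useq b α β (i+1) = useq b α β i * xf b α β i := useq_succ _ _ _ _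
    have hQi : β - α * gauss b i ≠ 0 := ne_of_gt (pos_Q h hb hD hi)
    have hk := k_eq h hb hD
    simp only [Nat.add_sub_cancel]
    by_cases hjD : i + 1 ≤ D - 1
    · have hbb : (bb (i+1) : ℝ) = (gauss b D - gauss b (i+1)) * (β - α * gauss b (i+1)) :=
        h.2.1 (i+1) hjD
      have hu2 : useq b α β (i+1+1) = useq b α β i * xf b α β i * xf b α β (i+1) := by
        rw [useq_succ, hu1]
      have hQj : β - α * gauss b (i+1) ≠ 0 := ne_of_gt (pos_Q h hb hD hjD)
      rw [haa, hcc, hbb, hu1, hu2, hk]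
      unfold xf
      have hQj' : β - gauss b (i+1) * α ≠ 0 := by rwa [mul_comm] at hQj
      field_simp
      ring
    · have hjD' : i + 1 = D := by omega
      have hbb : (bb (i+1) : ℝ) = 0 := by rw [hjD']; exact_mod_cast bb_D h.1
      subst hjD'
      rw [haa, hcc, hbb, hu1, hk]
      unfold xf
      field_simp
      ring
end CP

section KR
variable [Fintype V] {G : SimpleGraph V} {D b : ℕ} {α β : ℝ} {cc aa bb : ℕ → ℕ}
  (h : HasClassicalParams G D b α β cc aa bb) (hb : 2 ≤ b) (hD : 3 ≤ D)
include h hb hD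

lemma kr_pos {i : ℕ} (hi : i ≤ D) : 0 < krseq cc bb i := by
  induction i with
  | zero => norm_num [krseq]
  | succ n IH =>
    have h1 : 0 < krseq cc bb n := IH (by omega)
    have h2 : 1 ≤ bb n := bb_pos h.1 (by omega)
    have h3 : 1 ≤ cc (n+1) := cc_pos h.1 (by omega) (by omega)
    have h2' : (0:ℝ) < (bb n : ℝ) := by exact_mod_cast Nat.lt_of_lt_of_le Nat.zero_lt_one h2
    have h3' : (0:ℝ) < (cc (n+1) : ℝ) := by exact_mod_cast Nat.lt_of_lt_of_le Nat.zero_lt_one h3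
    unfold krseq
    positivity

lemma kr_id {i : ℕ} (hi : i + 1 ≤ D) :
    (cc (i+1) : ℝ) * krseq cc bb (i+1) = krseq cc bb i * (bb i : ℝ) := by
  have h3 : 1 ≤ cc (i+1) := cc_pos h.1 (by omega) hi
  have h3' : (cc (i+1) : ℝ) ≠ 0 := by
    have : (0:ℝ) < (cc (i+1) : ℝ) := by exact_mod_cast Nat.lt_of_lt_of_le Nat.zero_lt_one h3
    exact ne_of_gt this
  show (cc (i+1) : ℝ) * (krseq cc bb i * bb i / cc (i+1)) = _
  field_simp

lemma num_step {j : ℕ} (h1 : 1 ≤ j) (hj : j + 1 ≤ D) :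
    (cc (j+1) : ℝ) * (krseq cc bb (j+1) * useq b α β (j+1))
      = (-(gauss b D) - (aa j : ℝ)) * (krseq cc bb j * useq b α β j)
        - (bb (j-1) : ℝ) * (krseq cc bb (j-1) * useq b α β (j-1)) := by
  obtain ⟨i, rfl⟩ : ∃ i, j = i + 1 := ⟨j - 1, by omega⟩
  have hr := rrec h hb hD (j := i+1) (by omega)
  simp only [Nat.add_sub_cancel] at hr ⊢
  have hid1 : (cc (i+1) : ℝ) * krseq cc bb (i+1) = krseq cc bb i * (bb i : ℝ) :=
    kr_id h hb hD (by omega)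
  have hid2 : (cc (i+1+1) : ℝ) * krseq cc bb (i+1+1) = krseq cc bb (i+1) * (bb (i+1) : ℝ) :=
    kr_id h hb hD hj
  linear_combination krseq cc bb (i+1) * hr - useq b α β i * hid1 + useq b α β (i+1+1) * hid2
end KR
section Op
variable [Fintype V] {G : SimpleGraph V} {D b : ℕ} {α β : ℝ} {cc aa bb : ℕ → ℕ}
  [DecidableRel G.Adj]
  (h : HasClassicalParams G D b α β cc aa bb) (hb : 2 ≤ b) (hD : 3 ≤ D)
include h hb hD

lemma core (x y : V) :
    ∑ z : V, (if G.Adj x z then useq b α β (G.dist y z) else 0)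
      = -(gauss b D) * useq b α β (G.dist y x) := by
  classical
  by_cases hd0 : G.dist y x = 0
  · have hyx : y = x := (h.1.1.dist_eq_zero_iff).mp hd0
    subst hyx
    have hone : ∀ z : V, G.Adj y z → G.dist y z = 1 :=
      fun z hz => SimpleGraph.dist_eq_one_iff_adj.mpr hz
    have : ∀ z : V, (if G.Adj y z then useq b α β (G.dist y z) else 0)
        = (if G.Adj y z then useq b α β 1 else 0) := by
      intro z
      split_ifs with hz
      · rw [hone z hz]
      · rfl
    rw [Finset.sum_congr rfl (fun z _ => this z), ← Finset.sum_filter, Finset.sum_const,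
      nsmul_eq_mul, drg_deg h.1 y, hd0, useq_one h hb hD, useq_zero, k_eq h hb hD]
    have hβ : β ≠ 0 := ne_of_gt (beta_pos h hb hD)
    field_simp
  · have hd1 : 1 ≤ G.dist y x := by omega
    rw [split_sum h.1 x y rfl hd1 (useq b α β)]
    exact rrec h hb hD (h.1.2.1 y x)

lemma aop_sop {j : ℕ} (hj1 : 1 ≤ j) (hj2 : j + 1 ≤ D) (f : V → ℝ) (x : V) :
    ∑ z : V, (if G.Adj x z then (∑ y : V, if G.dist z y = j then f y else 0) else 0)
      = (cc (j+1) : ℝ) * (∑ y : V, if G.dist x y = j+1 then f y else 0)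
        + (aa j : ℝ) * (∑ y : V, if G.dist x y = j then f y else 0)
        + (bb (j-1) : ℝ) * (∑ y : V, if G.dist x y = j-1 then f y else 0) := by
  classical
  have step1 : ∀ z : V, (if G.Adj x z then (∑ y : V, if G.dist z y = j then f y else 0) else 0)
      = ∑ y : V, (if G.Adj x z ∧ G.dist z y = j then f y else 0) := by
    intro z
    split_ifs with hz
    · exact Finset.sum_congr rfl fun y _ => by simp [hz]
    · simp [hz]
  rw [Finset.sum_congr rfl (fun z _ => step1 z), Finset.sum_comm]
  rw [Finset.mul_sum, Finset.mul_sum, Finset.mul_sum, ← Finset.sum_add_distrib,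
    ← Finset.sum_add_distrib]
  refine Finset.sum_congr rfl fun y _ => ?_
  have hcount : ∑ z : V, (if G.Adj x z ∧ G.dist z y = j then f y else 0)
      = ({z : V | G.Adj x z ∧ G.dist y z = j}.ncard : ℝ) * f y := by
    rw [ncard_eq_filter_card]
    rw [← Finset.sum_filter, Finset.sum_const, nsmul_eq_mul]
    have hfil : (Finset.univ.filter (fun z => G.Adj x z ∧ G.dist z y = j))
        = (Finset.univ.filter (fun z : V => G.Adj x z ∧ G.dist y z = j)) := by
      ext z
      simp [SimpleGraph.dist_comm]
    rw [hfil]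
  rw [hcount]
  set d := G.dist x y with hdxy
  have hdyx : G.dist y x = d := by rw [SimpleGraph.dist_comm]
  have hdD : d ≤ D := h.1.2.1 x y
  have hcounts := h.1.2.2.2 d hdD y x hdyx
  by_cases h1 : d = j + 1
  · have hset : {z : V | G.Adj x z ∧ G.dist y z = j}.ncard = cc (j+1) := by
      have h5 := hcounts.1
      rw [h1] at h5
      simpa using h5
    have e1 : ¬ (d = j) := by omega
    have e2 : ¬ (d = j - 1) := by omega
    rw [hset, if_pos h1, if_neg e1, if_neg e2]
    ring
  · by_cases h2 : d = j
    · have hset : {z : V | G.Adj x z ∧ G.dist y z = j}.ncard = aa j := by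
        have h5 := hcounts.2.1
        rw [h2] at h5
        exact h5
      have e2 : ¬ (d = j - 1) := by omega
      rw [hset, if_pos h2, if_neg h1, if_neg e2]
      ring
    · by_cases h3 : d = j - 1
      · have hset : {z : V | G.Adj x z ∧ G.dist y z = j}.ncard = bb (j-1) := by
          have h5 := hcounts.2.2
          rw [h3] at h5
          have hj' : j - 1 + 1 = j := by omega
          rw [hj'] at h5
          exact h5
        rw [hset, if_pos h3, if_neg h1, if_neg h2]
        ring
      · have hset : {z : V | G.Adj x z ∧ G.dist y z = j} = ∅ := by
          ext z
          simp only [Set.mem_setOf_eq, Set.mem_empty_iff_false, iff_false, not_and]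
          intro hz hdist
          rcases dist_band h.1.1 hz d hdyx with hc | hc | hc <;> omega
        rw [hset, Set.ncard_empty, if_neg h1, if_neg h2, if_neg h3]
        push_cast
        ring
  done

lemma sop_eq (f : V → ℝ)
    (hf : ∀ x : V, ∑ z : V, (if G.Adj x z then f z else 0) = -(gauss b D) * f x) :
    ∀ i, i ≤ D → ∀ x : V, ∑ y : V, (if G.dist x y = i then f y else 0)
      = krseq cc bb i * useq b α β i * f x := by
  intro i
  induction i using Nat.strong_induction_on with
  | _ i IH =>
    match i with
    | 0 =>
      intro _ x
      have hsum : ∑ y : V, (if G.dist x y = 0 then f y else 0) = f x := by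
        rw [Finset.sum_eq_single x]
        · simp [SimpleGraph.dist_self]
        · intro y _ hy
          rw [if_neg]
          intro hc
          exact hy ((h.1.1.dist_eq_zero_iff.mp hc)).symm
        · intro hx
          exact absurd (Finset.mem_univ x) hx
      rw [hsum]
      simp [krseq, useq_zero]
    | 1 =>
      intro _ x
      simp only [SimpleGraph.dist_eq_one_iff_adj]
      rw [hf x, useq_one h hb hD]
      have hβ : β ≠ 0 := ne_of_gt (beta_pos h hb hD)
      have hcc1 : (cc 1 : ℝ) = 1 := by
        have := h.2.2 1 (le_refl 1) (by omega)
        simpa [gauss] using this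
      have hkr1 : krseq cc bb 1 = krseq cc bb 0 * (bb 0 : ℝ) / (cc 1 : ℝ) := rfl
      have hkr0 : krseq cc bb 0 = 1 := rfl
      rw [hkr1, hkr0, hcc1, k_eq h hb hD]
      field_simp
    | (j+2) =>
      intro hiD x
      have hj1 : 1 ≤ j + 1 := by omega
      have hj2 : (j+1) + 1 ≤ D := by omega
      have hAS := aop_sop h hb hD hj1 hj2 f x
      simp only [Nat.add_sub_cancel] at hAS
      have hIH1 := IH (j+1) (by omega) (by omega)
      have hIH0 := IH j (by omega) (by omega)
      have hLHS : ∑ z : V, (if G.Adj x z then (∑ y : V, if G.dist z y = j+1 then f y else 0) else 0)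
          = krseq cc bb (j+1) * useq b α β (j+1) * (-(gauss b D) * f x) := by
        have : ∀ z : V, (if G.Adj x z then (∑ y : V, if G.dist z y = j+1 then f y else 0) else 0)
            = krseq cc bb (j+1) * useq b α β (j+1) * (if G.Adj x z then f z else 0) := by
          intro z
          split_ifs with hz
          · rw [hIH1 z]
          · ring
        rw [Finset.sum_congr rfl (fun z _ => this z), ← Finset.mul_sum, hf x]
      rw [hLHS, hIH0 x, hIH1 x] at hAS
      have hns := num_step h hb hD (j := j+1) hj1 hj2
      simp only [Nat.add_sub_cancel] at hns
      have hccne : (cc (j+1+1) : ℝ) ≠ 0 := by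
        have := cc_pos h.1 (i := j+1+1) (by omega) (by omega)
        have : (1:ℝ) ≤ (cc (j+1+1) : ℝ) := by exact_mod_cast this
        linarith
      show ∑ y : V, (if G.dist x y = j+1+1 then f y else 0)
        = krseq cc bb (j+1+1) * useq b α β (j+1+1) * f x
      refine mul_left_cancel₀ hccne ?_
      linear_combination (-1 : ℝ) * hAS - f x * hns

lemma mop_decomp (f : V → ℝ) (x : V) :
    ∑ y : V, useq b α β (G.dist x y) * f y
      = ∑ i ∈ Finset.range (D+1), useq b α β i * ∑ y : V, (if G.dist x y = i then f y else 0) := by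
  classical
  have step : ∀ i, useq b α β i * ∑ y : V, (if G.dist x y = i then f y else 0)
      = ∑ y : V, (if G.dist x y = i then useq b α β i * f y else 0) := by
    intro i
    rw [Finset.mul_sum]
    exact Finset.sum_congr rfl fun y _ => by split_ifs <;> simp
  rw [Finset.sum_congr rfl (fun i _ => step i), Finset.sum_comm]
  refine Finset.sum_congr rfl fun y _ => ?_
  have hmem : G.dist x y ∈ Finset.range (D+1) := Finset.mem_range.mpr (by
    have := h.1.2.1 x y; omega)
  have : ∀ i ∈ Finset.range (D+1), (if G.dist x y = i then useq b α β i * f y else 0)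
      = (if G.dist x y = i then useq b α β (G.dist x y) * f y else 0) := by
    intro i _
    split_ifs with hc
    · rw [hc]
    · rfl
  rw [Finset.sum_congr rfl this, Finset.sum_ite_eq (Finset.range (D+1)) (G.dist x y)
    (fun _ => useq b α β (G.dist x y) * f y), if_pos hmem]

lemma mop_eigen (f : V → ℝ)
    (hf : ∀ x : V, ∑ z : V, (if G.Adj x z then f z else 0) = -(gauss b D) * f x) (x : V) :
    ∑ y : V, useq b α β (G.dist x y) * f y
      = (∑ i ∈ Finset.range (D+1), krseq cc bb i * (useq b α β i)^2) * f x := by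
  rw [mop_decomp h hb hD f x, Finset.sum_mul]
  refine Finset.sum_congr rfl fun i hi => ?_
  rw [Finset.mem_range] at hi
  rw [sop_eq h hb hD f hf i (by omega) x]
  ring

lemma aop_mop (f : V → ℝ) (x : V) :
    ∑ z : V, (if G.Adj x z then ∑ y : V, useq b α β (G.dist z y) * f y else 0)
      = -(gauss b D) * ∑ y : V, useq b α β (G.dist x y) * f y := by
  classical
  have step : ∀ z : V, (if G.Adj x z then ∑ y : V, useq b α β (G.dist z y) * f y else 0)
      = ∑ y : V, (if G.Adj x z then useq b α β (G.dist y z) * f y else 0) := by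
    intro z
    split_ifs with hz
    · exact Finset.sum_congr rfl fun y _ => by rw [SimpleGraph.dist_comm]
    · simp
  rw [Finset.sum_congr rfl (fun z _ => step z), Finset.sum_comm, Finset.mul_sum]
  refine Finset.sum_congr rfl fun y _ => ?_
  have : ∀ z : V, (if G.Adj x z then useq b α β (G.dist y z) * f y else 0)
      = (if G.Adj x z then useq b α β (G.dist y z) else 0) * f y := by
    intro z; split_ifs <;> simp
  rw [Finset.sum_congr rfl (fun z _ => this z), ← Finset.sum_mul, core h hb hD x y,
    SimpleGraph.dist_comm]
  ring

lemma c_ge_one : 1 ≤ ∑ i ∈ Finset.range (D+1), krseq cc bb i * (useq b α β i)^2 := by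
  have h0 : krseq cc bb 0 * (useq b α β 0)^2 = 1 := by simp [krseq, useq_zero]
  rw [← h0]
  apply Finset.single_le_sum (f := fun i => krseq cc bb i * (useq b α β i)^2)
  · intro i hi
    rw [Finset.mem_range] at hi
    have := kr_pos h hb hD (i := i) (by omega)
    positivity
  · exact Finset.mem_range.mpr (by omega)

lemma selfadj (f g : V → ℝ) :
    ∑ x : V, g x * ∑ y : V, useq b α β (G.dist x y) * f y
      = ∑ x : V, f x * ∑ y : V, useq b α β (G.dist x y) * g y := by
  have l : ∀ (u w : V → ℝ), ∑ x : V, u x * ∑ y : V, useq b α β (G.dist x y) * w y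
      = ∑ x : V, ∑ y : V, u x * useq b α β (G.dist x y) * w y := by
    intro u w
    refine Finset.sum_congr rfl fun x _ => ?_
    rw [Finset.mul_sum]
    exact Finset.sum_congr rfl fun y _ => by ring
  rw [l f g, l g f, Finset.sum_comm]
  refine Finset.sum_congr rfl fun x _ => Finset.sum_congr rfl fun y _ => ?_
  rw [SimpleGraph.dist_comm]
  ring
end Op
section Cliq
variable [Fintype V] {G : SimpleGraph V} {D b : ℕ} {α β : ℝ} {cc aa bb : ℕ → ℕ}
  (h : HasClassicalParams G D b α β cc aa bb) (hb : 2 ≤ b) (hD : 3 ≤ D)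
include h hb hD

lemma clique_Q (C : Set V) (hC : G.IsClique C) :
    0 ≤ (C.ncard : ℝ) * (1 + ((C.ncard : ℝ) - 1) * (-(1/β))) ∧
    ((C.ncard : ℝ) * (1 + ((C.ncard : ℝ) - 1) * (-(1/β))) = 0 →
      ∀ x : V, ∑ y ∈ C.toFinite.toFinset, useq b α β (G.dist x y) = 0) := by
  classical
  set Cf := C.toFinite.toFinset with hCf
  have hmemCf : ∀ y, y ∈ Cf ↔ y ∈ C := fun y => C.toFinite.mem_toFinset
  set χ : V → ℝ := fun z => if z ∈ C then (1:ℝ) else 0 with hχ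
  set w : V → ℝ := fun x => ∑ y : V, useq b α β (G.dist x y) * χ y with hw
  set c : ℝ := ∑ i ∈ Finset.range (D+1), krseq cc bb i * (useq b α β i)^2 with hc
  have hcpos : (0:ℝ) < c := lt_of_lt_of_le one_pos (c_ge_one h hb hD)
  -- w is a theta-eigenfunction of the adjacency operator
  have hAw : ∀ x : V, ∑ z : V, (if G.Adj x z then w z else 0) = -(gauss b D) * w x :=
    fun x => aop_mop h hb hD χ x
  -- w as a sum over the clique
  have hwsum : ∀ x : V, w x = ∑ y ∈ Cf, useq b α β (G.dist x y) := by
    intro x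
    show ∑ y : V, useq b α β (G.dist x y) * χ y = _
    calc ∑ y : V, useq b α β (G.dist x y) * χ y
        = ∑ y : V, (if y ∈ Cf then useq b α β (G.dist x y) else 0) :=
          Finset.sum_congr rfl (fun y _ => by by_cases hy : y ∈ C <;> simp [hχ, hy, hmemCf])
      _ = ∑ y ∈ Cf, useq b α β (G.dist x y) := by
          rw [Finset.sum_ite_mem, Finset.univ_inter]
  set Q : ℝ := ∑ x : V, χ x * w x with hQdef
  have hsq : (0:ℝ) ≤ ∑ x : V, (w x)^2 := Finset.sum_nonneg fun x _ => sq_nonneg _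
  have hcQ : c * Q = ∑ x : V, (w x)^2 := by
    calc c * Q = ∑ x : V, χ x * (c * w x) := by
          rw [hQdef, Finset.mul_sum]
          exact Finset.sum_congr rfl fun x _ => by ring
      _ = ∑ x : V, χ x * (∑ y : V, useq b α β (G.dist x y) * w y) :=
          Finset.sum_congr rfl fun x _ => by rw [mop_eigen h hb hD w hAw x, hc]
      _ = ∑ x : V, w x * (∑ y : V, useq b α β (G.dist x y) * χ y) := selfadj h hb hD w χ
      _ = ∑ x : V, (w x)^2 := Finset.sum_congr rfl fun x _ => by
          have hxx : ∑ y : V, useq b α β (G.dist x y) * χ y = w x := rfl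
          rw [hxx]; ring
  have hcard : (C.ncard : ℝ) = (Cf.card : ℝ) := by
    rw [Set.ncard_eq_toFinset_card C C.toFinite]
  have hQn : Q = (C.ncard : ℝ) * (1 + ((C.ncard : ℝ) - 1) * (-(1/β))) := by
    have hQ2 : Q = ∑ x ∈ Cf, w x := by
      rw [hQdef]
      calc ∑ x : V, χ x * w x
          = ∑ x : V, (if x ∈ Cf then w x else 0) :=
            Finset.sum_congr rfl (fun x _ => by by_cases hx : x ∈ C <;> simp [hχ, hx, hmemCf])
        _ = ∑ x ∈ Cf, w x := by rw [Finset.sum_ite_mem, Finset.univ_inter]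
    have hwx : ∀ x ∈ Cf, w x = 1 + ((C.ncard : ℝ) - 1) * (-(1/β)) := by
      intro x hx
      have hxC : x ∈ C := (hmemCf x).mp hx
      rw [hwsum x, ← Finset.add_sum_erase Cf _ hx]
      have h1 : useq b α β (G.dist x x) = 1 := by
        rw [SimpleGraph.dist_self, useq_zero]
      have h2 : ∀ y ∈ Cf.erase x, useq b α β (G.dist x y) = -(1/β) := by
        intro y hy
        obtain ⟨hyne, hyCf⟩ := Finset.mem_erase.mp hy
        have hyC : y ∈ C := (hmemCf y).mp hyCf
        have hadj : G.Adj x y := hC hxC hyC (Ne.symm hyne)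
        rw [SimpleGraph.dist_eq_one_iff_adj.mpr hadj, useq_one h hb hD]
      rw [h1, Finset.sum_congr rfl h2, Finset.sum_const, nsmul_eq_mul,
        Finset.card_erase_of_mem hx, hcard]
      have hge1 : 1 ≤ Cf.card := Finset.card_pos.mpr ⟨x, hx⟩
      rw [Nat.cast_sub hge1]
      push_cast
      ring
    rw [hQ2, Finset.sum_congr rfl hwx, Finset.sum_const, nsmul_eq_mul, hcard]
  constructor
  · rw [← hQn]
    nlinarith [hcQ, hsq, hcpos]
  · intro hQ0 x
    rw [← hQn] at hQ0
    have hwzero : ∀ z : V, w z = 0 := by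
      have hsum0 : ∑ x : V, (w x)^2 = 0 := by rw [← hcQ, hQ0, mul_zero]
      intro z
      have := (Finset.sum_eq_zero_iff_of_nonneg (fun x _ => sq_nonneg (w x))).mp hsum0 z
        (Finset.mem_univ z)
      exact pow_eq_zero_iff two_ne_zero |>.mp this
    rw [← hwsum x]
    exact hwzero x

end Cliq


end DelsarteAux

/-- the Delsarte bound for distance-regular graphs with classical parameters:
every clique has at most `β + 1` vertices, and in the equality case every vertex is at
distance at most `D - 1` from the clique, a vertex at distance `j` from the clique sees
exactly `1 + α[j]` vertices of the clique at distance `j`, and in particular a vertex at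
distance 1 from the clique has exactly `1 + α` neighbours in it. -/
theorem statement_2 {V : Type*} [Fintype V] (G : SimpleGraph V) (D b : ℕ) (α β : ℝ)
    (cc aa bb : ℕ → ℕ) (hb : 2 ≤ b) (hD : 3 ≤ D)
    (h : HasClassicalParams G D b α β cc aa bb) :
    (∀ C : Set V, G.IsClique C → (C.ncard : ℝ) ≤ β + 1) ∧
    (∀ C : Set V, G.IsClique C → (C.ncard : ℝ) = β + 1 →
      (∀ x : V, distToSet G x C ≤ D - 1) ∧
      (∀ j : ℕ, j ≤ D - 1 → ∀ x : V, distToSet G x C = j →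
        ({y ∈ C | G.dist x y = j}.ncard : ℝ) = 1 + α * gauss b j) ∧
      (∀ x : V, distToSet G x C = 1 →
        ({y ∈ C | G.Adj x y}.ncard : ℝ) = 1 + α)) := by
  classical
  have hβ : 0 < β := beta_pos h hb hD
  have part1 : ∀ C : Set V, G.IsClique C → (C.ncard : ℝ) ≤ β + 1 := by
    intro C hC
    have hQ := (clique_Q h hb hD C hC).1
    set n : ℝ := (C.ncard : ℝ) with hn
    by_cases hzero : C.ncard = 0
    · rw [hn, hzero]
      push_cast
      linarith
    · have h1 : (1:ℝ) ≤ n := by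
        rw [hn]
        exact_mod_cast Nat.one_le_iff_ne_zero.mpr hzero
      have hQβ : 0 ≤ n * β - n * (n - 1) := by
        have h2 : 0 ≤ (n * (1 + (n - 1) * (-(1/β)))) * β := mul_nonneg hQ (le_of_lt hβ)
        have h3 : (n * (1 + (n - 1) * (-(1/β)))) * β = n * β - n * (n - 1) := by
          field_simp
          ring
        linarith [h3 ▸ h2]
      by_contra hlt
      push_neg at hlt
      have h4 : n * β < n * (n - 1) :=
        mul_lt_mul_of_pos_left (by linarith) (by linarith : (0:ℝ) < n)
      linarith
  refine ⟨part1, ?_⟩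
  intro C hC hcardeq
  have hcon : G.Connected := h.1.1
  have hQ0cond : (C.ncard : ℝ) * (1 + ((C.ncard : ℝ) - 1) * (-(1/β))) = 0 := by
    rw [hcardeq]
    field_simp
    ring
  have hw0 := (clique_Q h hb hD C hC).2 hQ0cond
  set Cf := C.toFinite.toFinset with hCfdef
  have hmemCf : ∀ y, y ∈ Cf ↔ y ∈ C := fun y => C.toFinite.mem_toFinset
  have hCfcard : (Cf.card : ℝ) = β + 1 := by
    rw [← Set.ncard_eq_toFinset_card C C.toFinite]
    exact hcardeq
  have hCne : C.Nonempty := by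
    rcases Set.eq_empty_or_nonempty C with he | hne
    · exfalso
      rw [he] at hcardeq
      simp at hcardeq
      linarith
    · exact hne
  have hdts : ∀ x : V, ∃ y0 ∈ C, G.dist x y0 = distToSet G x C := by
    intro x
    have himg : (G.dist x '' C).Nonempty := hCne.image _
    obtain ⟨y0, hy0, hy0d⟩ := Nat.sInf_mem himg
    exact ⟨y0, hy0, hy0d⟩
  have hlb : ∀ x : V, ∀ y ∈ C, distToSet G x C ≤ G.dist x y := fun x y hy =>
    Nat.sInf_le (Set.mem_image_of_mem _ hy)
  have hub : ∀ x : V, ∀ y ∈ C, G.dist x y ≤ distToSet G x C + 1 := by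
    intro x y hy
    obtain ⟨y0, hy0C, hy0d⟩ := hdts x
    by_cases hyy : y = y0
    · subst hyy
      omega
    · have hadj : G.Adj y0 y := hC hy0C hy (fun e => hyy e.symm)
      calc G.dist x y ≤ G.dist x y0 + G.dist y0 y := hcon.dist_triangle
        _ = distToSet G x C + 1 := by
            rw [hy0d, SimpleGraph.dist_eq_one_iff_adj.mpr hadj]
  have hcount : ∀ j : ℕ, j ≤ D - 1 → ∀ x : V, distToSet G x C = j →
      ({y ∈ C | G.dist x y = j}.ncard : ℝ) = 1 + α * gauss b j := by
    intro j hjD1 x hj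
    set A1 := Cf.filter (fun y => G.dist x y = j) with hA1
    set A2 := Cf.filter (fun y => ¬ G.dist x y = j) with hA2
    have hset : {y ∈ C | G.dist x y = j}.ncard = A1.card := by
      rw [ncard_eq_filter_card (fun y => y ∈ C ∧ G.dist x y = j)]
      congr 1
      ext y
      simp only [Finset.mem_filter, Finset.mem_univ, true_and, hA1, hmemCf]
    have hsplit := Finset.sum_filter_add_sum_filter_not Cf (fun y => G.dist x y = j)
      (fun y => useq b α β (G.dist x y))
    have e1 : ∑ y ∈ A1, useq b α β (G.dist x y) = (A1.card : ℝ) * useq b α β j := by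
      rw [Finset.sum_congr rfl (fun y hy => by rw [(Finset.mem_filter.mp hy).2]),
        Finset.sum_const, nsmul_eq_mul]
    have e2 : ∑ y ∈ A2, useq b α β (G.dist x y) = (A2.card : ℝ) * useq b α β (j+1) := by
      rw [Finset.sum_congr rfl (fun y hy => ?_), Finset.sum_const, nsmul_eq_mul]
      obtain ⟨hyCf, hyne⟩ := Finset.mem_filter.mp hy
      have hyC : y ∈ C := (hmemCf y).mp hyCf
      have h5 := hlb x y hyC
      have h6 := hub x y hyC
      have : G.dist x y = j + 1 := by omega
      rw [this]
    have hcards : A1.card + A2.card = Cf.card :=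
      Finset.card_filter_add_card_filter_not (fun y => G.dist x y = j)
    have heq0 : (A1.card : ℝ) * useq b α β j + ((β+1) - (A1.card:ℝ)) * useq b α β (j+1) = 0 := by
      have hA2c : (A2.card : ℝ) = (β + 1) - (A1.card : ℝ) := by
        have : (A1.card : ℝ) + (A2.card : ℝ) = (Cf.card : ℝ) := by exact_mod_cast hcards
        rw [hCfcard] at this
        linarith
      rw [← hA2c, ← e1, ← e2, hsplit]
      exact hw0 x
    have huj : useq b α β j ≠ 0 := useq_ne h hb hD (by omega)
    have heq1 : (A1.card : ℝ) + ((β+1) - (A1.card:ℝ)) * xf b α β j = 0 := by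
      have h5 : useq b α β j * ((A1.card : ℝ) + ((β+1) - (A1.card:ℝ)) * xf b α β j) = 0 := by
        rw [useq_succ] at heq0
        linear_combination heq0
      rcases mul_eq_zero.mp h5 with h6 | h6
      · exact absurd h6 huj
      · exact h6
    have hQj : (0:ℝ) < β - α * gauss b j := pos_Q h hb hD hjD1
    have hQjne : β - α * gauss b j ≠ 0 := ne_of_gt hQj
    rw [show xf b α β j = -((1 + α * gauss b j)/(β - α * gauss b j)) from rfl] at heq1
    field_simp at heq1
    have hβ1 : β + 1 ≠ 0 := by linarith
    rw [hset]
    refine mul_left_cancel₀ hβ1 ?_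
    linear_combination heq1
  have hfar : ∀ x : V, distToSet G x C ≤ D - 1 := by
    intro x
    obtain ⟨y0, hy0C, hy0d⟩ := hdts x
    have hjD : distToSet G x C ≤ D := by
      have := h.1.2.1 x y0
      omega
    by_contra hgt
    have hjD' : distToSet G x C = D := by omega
    have halld : ∀ y ∈ Cf, G.dist x y = D := by
      intro y hy
      have h5 := hlb x y ((hmemCf y).mp hy)
      have h6 := h.1.2.1 x y
      omega
    have h7 := hw0 x
    rw [Finset.sum_congr rfl (fun y hy => by rw [halld y hy]), Finset.sum_const,
      nsmul_eq_mul] at h7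
    have hune : useq b α β D ≠ 0 := useq_ne h hb hD (le_refl D)
    have hcard0 : (Cf.card : ℝ) ≠ 0 := by
      rw [hCfcard]
      linarith
    rcases mul_eq_zero.mp h7 with hc0 | hc0
    · exact hcard0 hc0
    · exact hune hc0
  refine ⟨hfar, hcount, ?_⟩
  intro x hx1
  have hsets : {y ∈ C | G.Adj x y} = {y ∈ C | G.dist x y = 1} := by
    ext y
    simp only [Set.mem_setOf_eq, SimpleGraph.dist_eq_one_iff_adj]
  have := hcount 1 (by omega) x hx1
  rw [gauss_one] at this
  rw [hsets]
  rw [this]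
  ring
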